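/- The Cartan–Serre map CS : C(□^n) → C(Δ^n) is a map of counital coalgebras: (CS ⊗ CS) ∘ Δ_□ = Δ_AW ∘ CS and ε_Δ ∘ CS = ε_□, where Δ_□ is the Serre diagonal and Δ_AW the Alexander–Whitney coproduct. -/

import Mathlib

/-- The three cells of the interval: `[0]`, `[0,1]` (written `mid`), and `[1]`. -/
inductive CubeF : Type
  | zero : CubeF
  | mid : CubeF
  | one : CubeF
  deriving DecidableEq

namespace CartanSerre

/-- Basis elements of the cubical chain complex `C(□^n)`: tensors `x_1 ⊗ ⋯ ⊗ x_n`. -/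
abbrev CubeB (n : ℕ) := Fin n → CubeF
/-- The cubical chain complex `C(□^n)` (as the free ℤ-module on its basis). -/
abbrev CubeChain (n : ℕ) := CubeB n →₀ ℤ
/-- `C(□^n) ⊗ C(□^n)`, modeled as the free ℤ-module on pairs of basis elements. -/
abbrev CubeChain2 (n : ℕ) := (CubeB n × CubeB n) →₀ ℤ
/-- Basis elements of `C(Δ^n)`: strictly increasing tuples `[v_0, …, v_m]` with
`v_i ∈ {0,…,n}`, i.e. nonempty finite subsets of `Fin (n+1)` (`∅` is not used). -/
abbrev SimpB (n : ℕ) := Finset (Fin (n + 1))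
/-- The normalized simplicial chain complex `C(Δ^n)`. -/
abbrev SimpChain (n : ℕ) := SimpB n →₀ ℤ
/-- `C(Δ^n) ⊗ C(Δ^n)`. -/
abbrev SimpChain2 (n : ℕ) := (SimpB n × SimpB n) →₀ ℤ

/-- Degree of a cubical basis element: the number of factors equal to `[0,1]`. -/
def cubeDeg {n : ℕ} (x : CubeB n) : ℕ :=
  (Finset.univ.filter fun i => x i = CubeF.mid).card

/-- Degree of a simplicial basis element `[v_0, …, v_m]`, namely `m`. -/
def simpDeg {n : ℕ} (s : SimpB n) : ℕ := s.card - 1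

/-- The cubical boundary on a basis element. -/
noncomputable def cubeBdFun (n : ℕ) (x : CubeB n) : CubeChain n :=
  ∑ i ∈ Finset.univ.filter (fun i => x i = CubeF.mid),
    ((-1 : ℤ) ^ (Finset.univ.filter fun j => j < i ∧ x j = CubeF.mid).card) •
      (Finsupp.single (Function.update x i CubeF.one) 1 -
        Finsupp.single (Function.update x i CubeF.zero) 1)

/-- The cubical boundary `∂ : C(□^n) → C(□^n)`. -/
noncomputable def cubeBd (n : ℕ) : CubeChain n →ₗ[ℤ] CubeChain n :=
  Finsupp.lift (CubeChain n) ℤ (CubeB n) (cubeBdFun n)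

/-- The (normalized) simplicial boundary on a basis element. -/
noncomputable def simpBdFun (n : ℕ) (s : SimpB n) : SimpChain n :=
  if 2 ≤ s.card then
    ∑ v ∈ s, ((-1 : ℤ) ^ (s.filter fun w => w < v).card) • Finsupp.single (s.erase v) 1
  else 0

/-- The simplicial boundary `∂ : C(Δ^n) → C(Δ^n)`. -/
noncomputable def simpBd (n : ℕ) : SimpChain n →ₗ[ℤ] SimpChain n :=
  Finsupp.lift (SimpChain n) ℤ (SimpB n) (simpBdFun n)

/-- `p(x) - 1` (0-indexed): the first position of a factor `[0]`, or `n` if there is none. -/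
def pIdx {n : ℕ} (x : CubeB n) : Fin (n + 1) :=
  ⟨(List.ofFn x).findIdx (fun c => decide (c = CubeF.zero)), by
    have h : (List.ofFn x).findIdx (fun c => decide (c = CubeF.zero)) ≤ (List.ofFn x).length :=
      List.findIdx_le_length
    simp only [List.length_ofFn] at h
    omega⟩

/-- The vertex set `[q_1 - 1, …, q_m - 1, p(x) - 1]` of the image of `x` under `CS`. -/
def csSet {n : ℕ} (x : CubeB n) : SimpB n :=
  insert (pIdx x) ((Finset.univ.filter fun i => x i = CubeF.mid).image Fin.castSucc)

/-- The Cartan–Serre map `CS` on a cubical basis element. -/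
noncomputable def csFun (n : ℕ) (x : CubeB n) : SimpChain n :=
  if ∃ i j : Fin n, i < j ∧ x i = CubeF.zero ∧ x j = CubeF.mid then 0
  else Finsupp.single (csSet x) 1

/-- The Cartan–Serre chain map `CS : C(□^n) → C(Δ^n)`. -/
noncomputable def csL (n : ℕ) : CubeChain n →ₗ[ℤ] SimpChain n :=
  Finsupp.lift (SimpChain n) ℤ (CubeB n) (csFun n)

/-- The cubical counit `ε_□ : C(□^n) → ℤ`. -/
noncomputable def cubeEps (n : ℕ) : CubeChain n →ₗ[ℤ] ℤ :=
  Finsupp.lift ℤ ℤ (CubeB n) (fun x => if cubeDeg x = 0 then (1 : ℤ) else 0)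

/-- The simplicial counit `ε_Δ : C(Δ^n) → ℤ`. -/
noncomputable def simpEps (n : ℕ) : SimpChain n →ₗ[ℤ] ℤ :=
  Finsupp.lift ℤ ℤ (SimpB n) (fun s => if s.card = 1 then (1 : ℤ) else 0)

/-- Tensor product of two elements of free modules, in the product-basis model. -/
noncomputable def tensorF {α β : Type*} (a : α →₀ ℤ) (b : β →₀ ℤ) : (α × β) →₀ ℤ :=
  a.sum fun i r => b.sum fun j s => Finsupp.single (i, j) (r * s)

/-- Left factor of the Serre diagonal summand indexed by `S`:
factors in `S` contribute `[0,1]`, the other `[0,1]`-factors contribute `[0]`. -/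
def serreL {n : ℕ} (x : CubeB n) (S : Finset (Fin n)) : CubeB n := fun i =>
  if x i = CubeF.mid then (if i ∈ S then CubeF.mid else CubeF.zero) else x i

/-- Right factor of the Serre diagonal summand indexed by `S`. -/
def serreR {n : ℕ} (x : CubeB n) (S : Finset (Fin n)) : CubeB n := fun i =>
  if x i = CubeF.mid then (if i ∈ S then CubeF.one else CubeF.mid) else x i

/-- Koszul sign exponent of the Serre diagonal summand indexed by `S`. -/
def serreSign {n : ℕ} (x : CubeB n) (S : Finset (Fin n)) : ℕ :=
  ((Finset.univ : Finset (Fin n × Fin n)).filter fun p =>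
    p.1 < p.2 ∧ x p.1 = CubeF.mid ∧ p.1 ∉ S ∧ p.2 ∈ S).card

/-- The Serre diagonal `Δ_□` on a basis element: the tensor product (with Koszul
signs) of `Δ[0] = [0]⊗[0]`, `Δ[1] = [1]⊗[1]`, `Δ[0,1] = [0]⊗[0,1] + [0,1]⊗[1]`. -/
noncomputable def serreDiagFun (n : ℕ) (x : CubeB n) : CubeChain2 n :=
  ∑ S ∈ (Finset.univ.filter fun i => x i = CubeF.mid).powerset,
    ((-1 : ℤ) ^ serreSign x S) • Finsupp.single (serreL x S, serreR x S) 1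

/-- The Serre diagonal `Δ_□ : C(□^n) → C(□^n) ⊗ C(□^n)`. -/
noncomputable def serreDiag (n : ℕ) : CubeChain n →ₗ[ℤ] CubeChain2 n :=
  Finsupp.lift (CubeChain2 n) ℤ (CubeB n) (serreDiagFun n)

/-- The Alexander–Whitney coproduct on a basis element:
`Δ_AW [v_0,…,v_m] = Σ_i [v_0,…,v_i] ⊗ [v_i,…,v_m]`. -/
noncomputable def awFun (n : ℕ) (s : SimpB n) : SimpChain2 n :=
  ∑ v ∈ s, Finsupp.single (s.filter fun w => w ≤ v, s.filter fun w => v ≤ w) 1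

/-- The Alexander–Whitney coproduct `Δ_AW : C(Δ^n) → C(Δ^n) ⊗ C(Δ^n)`. -/
noncomputable def awDiag (n : ℕ) : SimpChain n →ₗ[ℤ] SimpChain2 n :=
  Finsupp.lift (SimpChain2 n) ℤ (SimpB n) (awFun n)

/-- `CS ⊗ CS : C(□^n) ⊗ C(□^n) → C(Δ^n) ⊗ C(Δ^n)` (no Koszul signs: `CS` has degree 0). -/
noncomputable def cs2L (n : ℕ) : CubeChain2 n →ₗ[ℤ] SimpChain2 n :=
  Finsupp.lift (SimpChain2 n) ℤ (CubeB n × CubeB n)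
    (fun p => tensorF (csFun n p.1) (csFun n p.2))

/-- The join on single cube factors: `[0] ∗ [1] = [0,1]`, `[1] ∗ [0] = -[0,1]`,
all other joins of basis elements vanish (the outcome factor being `[0,1]`). -/
def joinF : CubeF → CubeF → ℤ
  | CubeF.zero, CubeF.one => 1
  | CubeF.one, CubeF.zero => -1
  | _, _ => 0

/-- The cubical join `∗` on basis elements. -/
noncomputable def cubeJoinFun (n : ℕ) (x y : CubeB n) : CubeChain n :=
  ((-1 : ℤ) ^ cubeDeg x) •
    ∑ l : Fin n,
      ((if (∀ j, j < l → y j ≠ CubeF.mid) ∧ (∀ j, l < j → x j ≠ CubeF.mid) then (1 : ℤ) else 0) *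
          joinF (x l) (y l)) •
        Finsupp.single (fun j => if j < l then x j else if j = l then CubeF.mid else y j) 1

/-- The cubical join, extended bilinearly to chains. -/
noncomputable def cubeJoinC (n : ℕ) (a b : CubeChain n) : CubeChain n :=
  a.sum fun x r => b.sum fun y s => (r * s) • cubeJoinFun n x y

/-- The simplicial join `∗` on basis elements: `0` if the vertex sets meet, and
otherwise `(-1)^{p + |σ|}` times the union, `|σ|` counting the inversions. -/
noncomputable def simpJoinFun (n : ℕ) (s t : SimpB n) : SimpChain n :=
  if s ∩ t = ∅ ∧ s.Nonempty ∧ t.Nonempty then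
    ((-1 : ℤ) ^ ((s.card - 1) + ((s ×ˢ t).filter fun p => p.2 < p.1).card)) •
      Finsupp.single (s ∪ t) 1
  else 0

/-- The simplicial join, extended bilinearly to chains. -/
noncomputable def simpJoinC (n : ℕ) (a b : SimpChain n) : SimpChain n :=
  a.sum fun s r => b.sum fun t u => (r * u) • simpJoinFun n s t

/-- The linear order `[0] < [0,1] < [1]` on interval cells, via `0 < 1 < 2`. -/
def cellVal : CubeF → ℕ
  | CubeF.zero => 0
  | CubeF.mid => 1
  | CubeF.one => 2

/-- The componentwise partial order on cubical basis elements,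
with `[0] < [0,1] < [1]` on each factor. -/
def cubeLe {n : ℕ} (x y : CubeB n) : Prop := ∀ i, cellVal (x i) ≤ cellVal (y i)

/-- Left-parenthesized iterated join of a nonempty list (the base case `[]` is junk). -/
noncomputable def foldJoin {C : Type*} (join : C → C → C) (z : C) : List C → C
  | [] => z
  | a :: l => l.foldl join a

/-- Left-parenthesized iterated cubical join `∗^{k}` of `k+1` basis elements. -/
noncomputable def iterCubeJoin (n k : ℕ) (f : Fin (k + 1) → CubeB n) : CubeChain n :=
  foldJoin (cubeJoinC n) 0 (List.ofFn fun i : Fin (k + 1) => (Finsupp.single (f i) 1 : CubeChain n))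

/-- Left-parenthesized iterated simplicial join `∗^{k}` of `k+1` chains. -/
noncomputable def iterSimpJoin (n k : ℕ) (g : Fin (k + 1) → SimpChain n) : SimpChain n :=
  foldJoin (simpJoinC n) 0 (List.ofFn g)

/-- The iterated Serre diagonal `Δ_□^k` on a basis element, with `k+1` output factors
(iterated on the last factor; this is unambiguous by coassociativity, and no Koszul
signs appear since `Δ_□` has degree `0`). -/
noncomputable def serreIterFun (n : ℕ) : (k : ℕ) → CubeB n → ((Fin (k + 1) → CubeB n) →₀ ℤ)
  | 0, x => Finsupp.single (fun _ => x) 1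
  | k + 1, x =>
    (serreIterFun n k x).sum fun f c =>
      (serreDiagFun n (f (Fin.last k))).sum fun p d =>
        Finsupp.single
          (fun i : Fin (k + 2) =>
            if h : (i : ℕ) < k then f ⟨(i : ℕ), by omega⟩
            else if (i : ℕ) = k then p.1 else p.2) (c * d)

/-- The iterated Serre diagonal `Δ_□^k : C(□^n) → C(□^n)^{⊗(k+1)}`. -/
noncomputable def serreIter (n k : ℕ) : CubeChain n →ₗ[ℤ] ((Fin (k + 1) → CubeB n) →₀ ℤ) :=
  Finsupp.lift _ ℤ (CubeB n) (serreIterFun n k)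

/-- The iterated Alexander–Whitney coproduct `Δ_AW^k` on a basis element. -/
noncomputable def awIterFun (n : ℕ) : (k : ℕ) → SimpB n → ((Fin (k + 1) → SimpB n) →₀ ℤ)
  | 0, s => Finsupp.single (fun _ => s) 1
  | k + 1, s =>
    (awIterFun n k s).sum fun f c =>
      (awFun n (f (Fin.last k))).sum fun p d =>
        Finsupp.single
          (fun i : Fin (k + 2) =>
            if h : (i : ℕ) < k then f ⟨(i : ℕ), by omega⟩
            else if (i : ℕ) = k then p.1 else p.2) (c * d)

/-- The iterated Alexander–Whitney coproduct `Δ_AW^k : C(Δ^n) → C(Δ^n)^{⊗(k+1)}`. -/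
noncomputable def awIter (n k : ℕ) : SimpChain n →ₗ[ℤ] ((Fin (k + 1) → SimpB n) →₀ ℤ) :=
  Finsupp.lift _ ℤ (SimpB n) (awIterFun n k)

/-- The action of a permutation `τ` on a `k`-fold tensor of basis elements,
with the Koszul sign determined by the degrees of the factors it transposes. -/
noncomputable def koszulPermFun {α : Type*} (deg : α → ℕ) {k : ℕ} (τ : Equiv.Perm (Fin k))
    (f : Fin k → α) : (Fin k → α) →₀ ℤ :=
  ((-1 : ℤ) ^ ∑ p ∈ (Finset.univ : Finset (Fin k × Fin k)).filter
      (fun p => p.1 < p.2 ∧ τ p.2 < τ p.1), deg (f (τ p.1)) * deg (f (τ p.2))) •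
    Finsupp.single (fun i => f (τ i)) 1

/-- The action of a permutation on `k`-fold tensors, with Koszul signs. -/
noncomputable def koszulPerm {α : Type*} (deg : α → ℕ) {k : ℕ} (τ : Equiv.Perm (Fin k)) :
    ((Fin k → α) →₀ ℤ) →ₗ[ℤ] ((Fin k → α) →₀ ℤ) :=
  Finsupp.lift _ ℤ (Fin k → α) (koszulPermFun deg τ)

/-- Tensor product of an `r`-tuple of elements of a free module, product-basis model. -/
noncomputable def tensorPi {r : ℕ} {α : Type*} [DecidableEq α] (c : Fin r → (α →₀ ℤ)) :
    (Fin r → α) →₀ ℤ :=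
  ∑ g ∈ Fintype.piFinset (fun i => (c i).support), Finsupp.single g (∏ i, (c i) (g i))

/-- `CS^{⊗ r} : C(□^n)^{⊗ r} → C(Δ^n)^{⊗ r}` (no Koszul signs: `CS` has degree 0). -/
noncomputable def csTensor (n r : ℕ) : ((Fin r → CubeB n) →₀ ℤ) →ₗ[ℤ] ((Fin r → SimpB n) →₀ ℤ) :=
  Finsupp.lift _ ℤ (Fin r → CubeB n) (fun f => tensorPi fun i => csFun n (f i))

/-- The index in `Fin (k_1 + ⋯ + k_r)` of the `j`-th tensor factor of the `i`-th block. -/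
def blockIdx {r : ℕ} (K : Fin r → ℕ) {m : ℕ} (hm : m + 1 = ∑ i, K i) (i : Fin r)
    (j : Fin (K i)) : Fin (m + 1) :=
  ⟨(∑ j' ∈ Finset.univ.filter (fun j' => j' < i), K j') + (j : ℕ), by
    have h2 : (j : ℕ) < K i := j.isLt
    have h3 : K i + ∑ j' ∈ Finset.univ.filter (fun j' => j' < i), K j' ≤ ∑ i', K i' := by
      rw [← Finset.sum_insert (a := i) (s := Finset.univ.filter (fun j' => j' < i)) (by simp)]
      exact Finset.sum_le_sum_of_subset (Finset.subset_univ _)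
    omega⟩

/-- A `(k_1, …, k_r)`-shuffle: a permutation increasing on each block. -/
def IsShuffle {r : ℕ} (K : Fin r → ℕ) {m : ℕ} (hm : m + 1 = ∑ i, K i)
    (σ : Equiv.Perm (Fin (m + 1))) : Prop :=
  ∀ (i : Fin r) (j j' : Fin (K i)), j < j' → σ (blockIdx K hm i j) < σ (blockIdx K hm i j')

/-- Total degree of the `i`-th block of a `k`-fold cubical tensor. -/
def cubeBlockDeg {n r : ℕ} (K : Fin r → ℕ) {m : ℕ} (hm : m + 1 = ∑ i, K i)
    (f : Fin (m + 1) → CubeB n) (i : Fin r) : ℕ :=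
  ∑ j : Fin (K i), cubeDeg (f (blockIdx K hm i j))

/-- Total degree of the `i`-th block of a `k`-fold simplicial tensor. -/
def simpBlockDeg {n r : ℕ} (K : Fin r → ℕ) {m : ℕ} (hm : m + 1 = ∑ i, K i)
    (f : Fin (m + 1) → SimpB n) (i : Fin r) : ℕ :=
  ∑ j : Fin (K i), simpDeg (f (blockIdx K hm i j))

/-- `∗^{k_1 - 1} ⊗ ⋯ ⊗ ∗^{k_r - 1}` on a cubical `k`-fold tensor basis element, with
the Koszul sign for applying the degree-`(k_i - 1)` maps across the earlier blocks. -/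
noncomputable def cubeBlockJoinFun (n r : ℕ) (K : Fin r → ℕ) {m : ℕ} (hm : m + 1 = ∑ i, K i)
    (f : Fin (m + 1) → CubeB n) : (Fin r → CubeB n) →₀ ℤ :=
  ((-1 : ℤ) ^ ∑ p ∈ (Finset.univ : Finset (Fin r × Fin r)).filter (fun p => p.1 < p.2),
      (K p.2 - 1) * cubeBlockDeg K hm f p.1) •
    tensorPi (fun i : Fin r =>
      foldJoin (cubeJoinC n) 0
        (List.ofFn fun j : Fin (K i) => (Finsupp.single (f (blockIdx K hm i j)) 1 : CubeChain n)))

/-- `∗^{k_1 - 1} ⊗ ⋯ ⊗ ∗^{k_r - 1} : C(□^n)^{⊗ k} → C(□^n)^{⊗ r}`. -/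
noncomputable def cubeBlockJoin (n r : ℕ) (K : Fin r → ℕ) {m : ℕ} (hm : m + 1 = ∑ i, K i) :
    ((Fin (m + 1) → CubeB n) →₀ ℤ) →ₗ[ℤ] ((Fin r → CubeB n) →₀ ℤ) :=
  Finsupp.lift _ ℤ (Fin (m + 1) → CubeB n) (cubeBlockJoinFun n r K hm)

/-- `∗^{k_1 - 1} ⊗ ⋯ ⊗ ∗^{k_r - 1}` on a simplicial `k`-fold tensor basis element. -/
noncomputable def simpBlockJoinFun (n r : ℕ) (K : Fin r → ℕ) {m : ℕ} (hm : m + 1 = ∑ i, K i)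
    (f : Fin (m + 1) → SimpB n) : (Fin r → SimpB n) →₀ ℤ :=
  ((-1 : ℤ) ^ ∑ p ∈ (Finset.univ : Finset (Fin r × Fin r)).filter (fun p => p.1 < p.2),
      (K p.2 - 1) * simpBlockDeg K hm f p.1) •
    tensorPi (fun i : Fin r =>
      foldJoin (simpJoinC n) 0
        (List.ofFn fun j : Fin (K i) => (Finsupp.single (f (blockIdx K hm i j)) 1 : SimpChain n)))

/-- `∗^{k_1 - 1} ⊗ ⋯ ⊗ ∗^{k_r - 1} : C(Δ^n)^{⊗ k} → C(Δ^n)^{⊗ r}`. -/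
noncomputable def simpBlockJoin (n r : ℕ) (K : Fin r → ℕ) {m : ℕ} (hm : m + 1 = ∑ i, K i) :
    ((Fin (m + 1) → SimpB n) →₀ ℤ) →ₗ[ℤ] ((Fin r → SimpB n) →₀ ℤ) :=
  Finsupp.lift _ ℤ (Fin (m + 1) → SimpB n) (simpBlockJoinFun n r K hm)

/-- A chain is homogeneous of degree `m` if its support is contained in degree-`m` basis elements. -/
def cubeHomog (n m : ℕ) (c : CubeChain n) : Prop := ∀ x ∈ c.support, cubeDeg x = m

/-- A simplicial chain is homogeneous of degree `m` if every basis element in its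
support is a strictly increasing tuple `[v_0, …, v_m]`, i.e. has `m+1` vertices. -/
def simpHomog (n m : ℕ) (c : SimpChain n) : Prop := ∀ s ∈ c.support, s.card = m + 1

end CartanSerre

/-! If a factor `[0]` of `x` precedes a factor `[0,1]`, then every term of `Δ_□ x` has such a
pair in one of its two tensor factors, so both sides vanish on `x`. Otherwise, the term of
`Δ_□ x` in which the `[0,1]`-factors at the positions `S` go to the left survives `CS ⊗ CS`
only when `S` is an initial segment of the `[0,1]`-positions. These initial segments
correspond to the vertices `v` of `CS x`; their terms carry no Koszul sign, and `CS ⊗ CS`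
sends them to the front face `[…, v]` tensor the back face `[v, …]`, which is the
Alexander–Whitney term of `v`. The counit identity is the count `|CS x| = deg x + 1`. -/

namespace CartanSerre

variable {n : ℕ}

theorem lift_single_eq_smul {R M X : Type*} [Semiring R] [AddCommMonoid M] [Module R M]
    (f : X → M) (a : X) (c : R) : Finsupp.lift M R X f (Finsupp.single a c) = c • f a := by
  rw [Finsupp.lift_apply, Finsupp.sum_single_index (zero_smul R (f a))]

theorem tensorF_single_single {α β : Type*} (a : α) (b : β) (c d : ℤ) :
    tensorF (Finsupp.single a c) (Finsupp.single b d) = Finsupp.single (a, b) (c * d) := by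
  rw [tensorF, Finsupp.sum_single_index (by simp), Finsupp.sum_single_index (by simp)]

@[simp]
theorem tensorF_zero_left {α β : Type*} (b : β →₀ ℤ) : tensorF (0 : α →₀ ℤ) b = 0 := by
  simp [tensorF]

@[simp]
theorem tensorF_zero_right {α β : Type*} (a : α →₀ ℤ) : tensorF a (0 : β →₀ ℤ) = 0 := by
  simp [tensorF]

def ZeroBeforeMid (x : CubeB n) : Prop :=
  ∃ i j : Fin n, i < j ∧ x i = CubeF.zero ∧ x j = CubeF.mid

theorem csFun_of_zeroBeforeMid {x : CubeB n} (hx : ZeroBeforeMid x) : csFun n x = 0 :=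
  if_pos hx

theorem csFun_of_not_zeroBeforeMid {x : CubeB n} (hx : ¬ ZeroBeforeMid x) :
    csFun n x = Finsupp.single (csSet x) 1 :=
  if_neg hx

def midSet (x : CubeB n) : Finset (Fin n) := Finset.univ.filter fun i => x i = CubeF.mid

theorem mem_midSet {x : CubeB n} {i : Fin n} : i ∈ midSet x ↔ x i = CubeF.mid := by
  simp [midSet]

section pIdx

variable {x : CubeB n} {i : Fin n}

theorem ne_zero_of_castSucc_lt_pIdx (h : i.castSucc < pIdx x) : x i ≠ CubeF.zero := by
  simpa using List.not_of_lt_findIdx (p := fun c => decide (c = CubeF.zero))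
    (xs := List.ofFn x) (i := i) h

theorem eq_zero_of_castSucc_eq_pIdx (h : i.castSucc = pIdx x) : x i = CubeF.zero := by
  have hi : (List.ofFn x).findIdx (fun c => decide (c = CubeF.zero)) = i :=
    (congrArg Fin.val h).symm
  simpa using ((List.findIdx_eq (by simp)).mp hi).1

theorem pIdx_eq_of {k : Fin (n + 1)} (hlt : ∀ i : Fin n, i.castSucc < k → x i ≠ CubeF.zero)
    (heq : ∀ i : Fin n, i.castSucc = k → x i = CubeF.zero) : pIdx x = k := by
  rcases lt_trichotomy (pIdx x) k with h | h | h
  · obtain ⟨i, hi⟩ := Fin.exists_castSucc_eq.mpr (Fin.ne_last_of_lt h)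
    exact absurd (eq_zero_of_castSucc_eq_pIdx hi) (hlt i (hi ▸ h))
  · exact h
  · obtain ⟨i, hi⟩ := Fin.exists_castSucc_eq.mpr (Fin.ne_last_of_lt h)
    exact absurd (heq i hi) (ne_zero_of_castSucc_lt_pIdx (hi ▸ h))

theorem castSucc_lt_pIdx (hx : ¬ ZeroBeforeMid x) (hi : x i = CubeF.mid) :
    i.castSucc < pIdx x := by
  by_contra! h
  obtain ⟨j, hj⟩ := Fin.exists_castSucc_eq.mpr
    (Fin.ne_last_of_lt (lt_of_le_of_lt h (Fin.castSucc_lt_last i)))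
  have hj0 := eq_zero_of_castSucc_eq_pIdx hj
  rw [← hj, Fin.castSucc_le_castSucc_iff] at h
  rcases h.lt_or_eq with hji | rfl
  · exact hx ⟨j, i, hji, hj0, hi⟩
  · simp [hi] at hj0

end pIdx

section csSet

variable {x : CubeB n} {w : Fin (n + 1)}

theorem csSet_eq (x : CubeB n) : csSet x = insert (pIdx x) ((midSet x).image Fin.castSucc) :=
  rfl

theorem mem_csSet : w ∈ csSet x ↔ w = pIdx x ∨ ∃ i, x i = CubeF.mid ∧ i.castSucc = w := by
  simp [csSet_eq, mem_midSet]

theorem pIdx_mem_csSet (x : CubeB n) : pIdx x ∈ csSet x :=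
  Finset.mem_insert_self _ _

theorem le_pIdx_of_mem_csSet (hx : ¬ ZeroBeforeMid x) (hw : w ∈ csSet x) : w ≤ pIdx x := by
  rcases mem_csSet.mp hw with rfl | ⟨i, hi, rfl⟩
  · exact le_rfl
  · exact (castSucc_lt_pIdx hx hi).le

theorem card_csSet (x : CubeB n) : (csSet x).card = cubeDeg x + 1 := by
  have hp : pIdx x ∉ (midSet x).image Fin.castSucc := by
    simp only [Finset.mem_image, mem_midSet, not_exists, not_and]
    intro i hi he
    simp [eq_zero_of_castSucc_eq_pIdx he] at hi
  rw [csSet_eq, Finset.card_insert_of_notMem hp,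
    Finset.card_image_of_injective _ (Fin.castSucc_injective n)]
  rfl

end csSet

section serre

variable {x : CubeB n} {S : Finset (Fin n)} {i : Fin n}

theorem serreL_eq_mid : serreL x S i = CubeF.mid ↔ x i = CubeF.mid ∧ i ∈ S := by
  unfold serreL; split_ifs <;> simp_all

theorem serreL_eq_zero :
    serreL x S i = CubeF.zero ↔ x i = CubeF.zero ∨ (x i = CubeF.mid ∧ i ∉ S) := by
  unfold serreL; split_ifs <;> simp_all

theorem serreR_eq_mid : serreR x S i = CubeF.mid ↔ x i = CubeF.mid ∧ i ∉ S := by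
  unfold serreR; split_ifs <;> simp_all

theorem serreR_eq_zero : serreR x S i = CubeF.zero ↔ x i = CubeF.zero := by
  unfold serreR; split_ifs <;> simp_all

theorem midSet_serreL (hS : S ⊆ midSet x) : midSet (serreL x S) = S := by
  ext i
  rw [mem_midSet, serreL_eq_mid]
  exact ⟨And.right, fun h => ⟨mem_midSet.mp (hS h), h⟩⟩

theorem midSet_serreR : midSet (serreR x S) = midSet x \ S := by
  ext i
  rw [mem_midSet, serreR_eq_mid, Finset.mem_sdiff, mem_midSet]

theorem pIdx_serreR : pIdx (serreR x S) = pIdx x :=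
  pIdx_eq_of (fun _ h hz => ne_zero_of_castSucc_lt_pIdx h (serreR_eq_zero.mp hz))
    (fun _ h => serreR_eq_zero.mpr (eq_zero_of_castSucc_eq_pIdx h))

theorem not_zeroBeforeMid_serreR (hx : ¬ ZeroBeforeMid x) : ¬ ZeroBeforeMid (serreR x S) :=
  fun ⟨i, j, hij, hi, hj⟩ => hx ⟨i, j, hij, serreR_eq_zero.mp hi, (serreR_eq_mid.mp hj).1⟩

theorem zeroBeforeMid_serreL_or_serreR (hx : ZeroBeforeMid x) (S : Finset (Fin n)) :
    ZeroBeforeMid (serreL x S) ∨ ZeroBeforeMid (serreR x S) := by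
  obtain ⟨i, j, hij, hi, hj⟩ := hx
  by_cases hjS : j ∈ S
  · exact Or.inl ⟨i, j, hij, serreL_eq_zero.mpr (Or.inl hi), serreL_eq_mid.mpr ⟨hj, hjS⟩⟩
  · exact Or.inr ⟨i, j, hij, serreR_eq_zero.mpr hi, serreR_eq_mid.mpr ⟨hj, hjS⟩⟩

end serre

def midsBelow (x : CubeB n) (v : Fin (n + 1)) : Finset (Fin n) :=
  (midSet x).filter fun i => i.castSucc < v

section midsBelow

variable {x : CubeB n} {v : Fin (n + 1)}

theorem mem_midsBelow {i : Fin n} : i ∈ midsBelow x v ↔ x i = CubeF.mid ∧ i.castSucc < v := by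
  simp [midsBelow, midSet]

theorem midsBelow_subset_midSet : midsBelow x v ⊆ midSet x :=
  Finset.filter_subset _ _

theorem serreSign_midsBelow : serreSign x (midsBelow x v) = 0 := by
  simp only [serreSign, Finset.card_eq_zero, Finset.filter_eq_empty_iff, mem_midsBelow]
  rintro ⟨i, j⟩ - ⟨hij, hi, hiS, -, hj⟩
  exact hiS ⟨hi, (Fin.castSucc_lt_castSucc_iff.mpr hij).trans hj⟩

theorem not_zeroBeforeMid_serreL_midsBelow (hx : ¬ ZeroBeforeMid x) :
    ¬ ZeroBeforeMid (serreL x (midsBelow x v)) := by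
  rintro ⟨i, j, hij, hi, hj⟩
  obtain ⟨hj, hjv⟩ := mem_midsBelow.mp (serreL_eq_mid.mp hj).2
  rcases serreL_eq_zero.mp hi with h0 | ⟨hi, hiS⟩
  · exact hx ⟨i, j, hij, h0, hj⟩
  · exact hiS (mem_midsBelow.mpr ⟨hi, (Fin.castSucc_lt_castSucc_iff.mpr hij).trans hjv⟩)

theorem pIdx_serreL_midsBelow (hx : ¬ ZeroBeforeMid x) (hv : v ∈ csSet x) :
    pIdx (serreL x (midsBelow x v)) = v := by
  refine pIdx_eq_of (fun i hiv hz => ?_) (fun i hiv => serreL_eq_zero.mpr ?_)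
  · rcases serreL_eq_zero.mp hz with h0 | ⟨hi, hiS⟩
    · exact ne_zero_of_castSucc_lt_pIdx (hiv.trans_le (le_pIdx_of_mem_csSet hx hv)) h0
    · exact hiS (mem_midsBelow.mpr ⟨hi, hiv⟩)
  · rcases mem_csSet.mp hv with rfl | ⟨j, hj, rfl⟩
    · exact Or.inl (eq_zero_of_castSucc_eq_pIdx hiv)
    · obtain rfl := Fin.castSucc_injective n hiv
      exact Or.inr ⟨hj, fun h => (mem_midsBelow.mp h).2.false⟩

theorem csSet_serreL_midsBelow (hx : ¬ ZeroBeforeMid x) (hv : v ∈ csSet x) :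
    csSet (serreL x (midsBelow x v)) = (csSet x).filter fun w => w ≤ v := by
  ext w
  rw [csSet_eq, pIdx_serreL_midsBelow hx hv, midSet_serreL midsBelow_subset_midSet,
    Finset.mem_insert, Finset.mem_image, Finset.mem_filter, mem_csSet]
  simp only [mem_midsBelow]
  constructor
  · rintro (rfl | ⟨i, ⟨hi, hiv⟩, rfl⟩)
    · exact ⟨mem_csSet.mp hv, le_rfl⟩
    · exact ⟨Or.inr ⟨i, hi, rfl⟩, hiv.le⟩
  · rintro ⟨rfl | ⟨i, hi, rfl⟩, hwv⟩
    · exact Or.inl (le_antisymm hwv (le_pIdx_of_mem_csSet hx hv))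
    · rcases hwv.lt_or_eq with hiv | hiv
      · exact Or.inr ⟨i, ⟨hi, hiv⟩, rfl⟩
      · exact Or.inl hiv

theorem csSet_serreR_midsBelow (hx : ¬ ZeroBeforeMid x) (hv : v ∈ csSet x) :
    csSet (serreR x (midsBelow x v)) = (csSet x).filter fun w => v ≤ w := by
  ext w
  rw [csSet_eq, pIdx_serreR, midSet_serreR, Finset.mem_insert, Finset.mem_image, Finset.mem_filter,
    mem_csSet]
  simp only [Finset.mem_sdiff, mem_midSet, mem_midsBelow, not_and, not_lt]
  constructor
  · rintro (rfl | ⟨i, ⟨hi, hvi⟩, rfl⟩)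
    · exact ⟨Or.inl rfl, le_pIdx_of_mem_csSet hx hv⟩
    · exact ⟨Or.inr ⟨i, hi, rfl⟩, hvi hi⟩
  · rintro ⟨rfl | ⟨i, hi, rfl⟩, hvw⟩
    · exact Or.inl rfl
    · exact Or.inr ⟨i, ⟨hi, fun _ => hvw⟩, rfl⟩

theorem le_of_midsBelow_subset (hx : ¬ ZeroBeforeMid x) {w : Fin (n + 1)} (hv : v ∈ csSet x)
    (hw : w ∈ csSet x) (h : midsBelow x v ⊆ midsBelow x w) : v ≤ w := by
  by_contra! hwv
  rcases mem_csSet.mp hw with rfl | ⟨i, hi, rfl⟩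
  · exact hwv.not_ge (le_pIdx_of_mem_csSet hx hv)
  · exact (mem_midsBelow.mp (h (mem_midsBelow.mpr ⟨hi, hwv⟩))).2.false

theorem injOn_midsBelow (hx : ¬ ZeroBeforeMid x) : Set.InjOn (midsBelow x) (csSet x) :=
  fun _ hv _ hw h => le_antisymm (le_of_midsBelow_subset hx hv hw h.le)
    (le_of_midsBelow_subset hx hw hv h.ge)

-- `¬ ZeroBeforeMid (serreL x S)` says that `S` is an initial segment of the `[0,1]`-positions.
theorem exists_eq_midsBelow (hx : ¬ ZeroBeforeMid x) {S : Finset (Fin n)} (hS : S ⊆ midSet x)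
    (hinit : ¬ ZeroBeforeMid (serreL x S)) : ∃ v ∈ csSet x, S = midsBelow x v := by
  set T := insert (pIdx x) ((midSet x \ S).image Fin.castSucc)
  have hT : T ⊆ csSet x :=
    Finset.insert_subset_insert _ (Finset.image_subset_image Finset.sdiff_subset)
  refine ⟨T.min' (Finset.insert_nonempty _ _), hT (Finset.min'_mem _ _), ?_⟩
  ext i
  rw [mem_midsBelow]
  constructor
  · intro hiS
    have hi := mem_midSet.mp (hS hiS)
    refine ⟨hi, (Finset.lt_min'_iff _ _).mpr fun w hw => ?_⟩
    rcases Finset.mem_insert.mp hw with rfl | hw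
    · exact castSucc_lt_pIdx hx hi
    obtain ⟨j, hj, rfl⟩ := Finset.mem_image.mp hw
    obtain ⟨hj, hjS⟩ := Finset.mem_sdiff.mp hj
    rw [Fin.castSucc_lt_castSucc_iff]
    rcases lt_trichotomy i j with hij | rfl | hji
    · exact hij
    · exact absurd hiS hjS
    · exact absurd ⟨j, i, hji, serreL_eq_zero.mpr (Or.inr ⟨mem_midSet.mp hj, hjS⟩),
        serreL_eq_mid.mpr ⟨hi, hiS⟩⟩ hinit
  · rintro ⟨hi, hiv⟩
    by_contra hiS
    have hiT : i.castSucc ∈ T := Finset.mem_insert_of_mem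
      (Finset.mem_image_of_mem _ (Finset.mem_sdiff.mpr ⟨mem_midSet.mpr hi, hiS⟩))
    exact (Finset.min'_le _ _ hiT).not_gt hiv

end midsBelow

theorem cs2L_single (p : CubeB n × CubeB n) :
    cs2L n (Finsupp.single p 1) = tensorF (csFun n p.1) (csFun n p.2) := by
  rw [cs2L, lift_single_eq_smul, one_smul]

theorem cs2L_serreDiagFun_of_zeroBeforeMid {x : CubeB n} (hx : ZeroBeforeMid x) :
    cs2L n (serreDiagFun n x) = 0 := by
  rw [serreDiagFun, map_sum]
  refine Finset.sum_eq_zero fun S _ => ?_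
  rw [map_zsmul, cs2L_single]
  rcases zeroBeforeMid_serreL_or_serreR hx S with h | h
  · rw [csFun_of_zeroBeforeMid h, tensorF_zero_left, smul_zero]
  · rw [csFun_of_zeroBeforeMid h, tensorF_zero_right, smul_zero]

theorem cs2L_serreDiagFun_of_not_zeroBeforeMid {x : CubeB n} (hx : ¬ ZeroBeforeMid x) :
    cs2L n (serreDiagFun n x) = awFun n (csSet x) := by
  set F : Finset (Fin n) → SimpChain2 n := fun S =>
    (-1 : ℤ) ^ serreSign x S • tensorF (csFun n (serreL x S)) (csFun n (serreR x S))
  have hsub : (csSet x).image (midsBelow x) ⊆ (midSet x).powerset := by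
    simp only [Finset.image_subset_iff, Finset.mem_powerset]
    exact fun _ _ => midsBelow_subset_midSet
  have hvanish : ∀ S ∈ (midSet x).powerset, S ∉ (csSet x).image (midsBelow x) → F S = 0 := by
    intro S hS hSv
    have hbad : ZeroBeforeMid (serreL x S) := by
      by_contra h
      obtain ⟨v, hv, rfl⟩ := exists_eq_midsBelow hx (Finset.mem_powerset.mp hS) h
      exact hSv (Finset.mem_image_of_mem _ hv)
    simp only [F, csFun_of_zeroBeforeMid hbad, tensorF_zero_left, smul_zero]
  have hface : ∀ v ∈ csSet x, F (midsBelow x v) =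
      Finsupp.single ((csSet x).filter (fun w => w ≤ v), (csSet x).filter (fun w => v ≤ w)) 1 := by
    intro v hv
    simp only [F, serreSign_midsBelow, pow_zero, one_smul,
      csFun_of_not_zeroBeforeMid (not_zeroBeforeMid_serreR hx),
      csFun_of_not_zeroBeforeMid (not_zeroBeforeMid_serreL_midsBelow hx),
      tensorF_single_single, csSet_serreL_midsBelow hx hv, csSet_serreR_midsBelow hx hv, mul_one]
  calc cs2L n (serreDiagFun n x)
      = ∑ S ∈ (midSet x).powerset, F S := by
        simp only [serreDiagFun, map_sum, map_zsmul, cs2L_single, F, midSet]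
    _ = ∑ S ∈ (csSet x).image (midsBelow x), F S := (Finset.sum_subset hsub hvanish).symm
    _ = ∑ v ∈ csSet x, F (midsBelow x v) := Finset.sum_image (injOn_midsBelow hx)
    _ = awFun n (csSet x) := Finset.sum_congr rfl hface

theorem simpEps_csFun (x : CubeB n) :
    simpEps n (csFun n x) = if cubeDeg x = 0 then 1 else 0 := by
  by_cases hx : ZeroBeforeMid x
  · have hdeg : cubeDeg x ≠ 0 := by
      obtain ⟨-, j, -, -, hj⟩ := hx
      exact Finset.card_ne_zero_of_mem (mem_midSet.mpr hj)
    rw [csFun_of_zeroBeforeMid hx, map_zero, if_neg hdeg]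
  · rw [csFun_of_not_zeroBeforeMid hx, simpEps, lift_single_eq_smul, card_csSet, one_smul]
    simp

end CartanSerre

open CartanSerre in
/-- The Cartan–Serre map `CS : C(□^n) → C(Δ^n)` is a map of counital
coalgebras: `(CS ⊗ CS) ∘ Δ_□ = Δ_AW ∘ CS` and `ε_Δ ∘ CS = ε_□`. -/
theorem cartanSerre_coalgebra_map (n : ℕ) :
    (cs2L n).comp (serreDiag n) = (awDiag n).comp (csL n) ∧
    (simpEps n).comp (csL n) = cubeEps n := by
  constructor
  · refine Finsupp.lhom_ext fun x c => ?_
    simp only [LinearMap.comp_apply, serreDiag, csL, lift_single_eq_smul, map_zsmul]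
    by_cases hx : ZeroBeforeMid x
    · rw [csFun_of_zeroBeforeMid hx, map_zero, cs2L_serreDiagFun_of_zeroBeforeMid hx]
    · rw [csFun_of_not_zeroBeforeMid hx, cs2L_serreDiagFun_of_not_zeroBeforeMid hx, awDiag,
        lift_single_eq_smul, one_smul]
  · refine Finsupp.lhom_ext fun x c => ?_
    simp only [LinearMap.comp_apply, csL, cubeEps, lift_single_eq_smul, map_zsmul, simpEps_csFun]
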